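/- arXiv:2209.10281 — 2 statements merged into one kernel-verified Lean document; each statement's English description precedes it below -/
import Mathlib

section
/- If $v$ is a $C^2$ function on a domain $\Omega \subset \mathbb{R}^2$ satisfying the modified Helmholtz equation $\nabla^2 v = \mu^2 v$ with $\mu \neq 0$, then for every closed disc $\overline{D_r(x)} \subset \Omega$ one has $\frac{1}{2\pi r}\int_{S_r(x)} v(y)\, dS_y = I_0(\mu r)\, v(x)$, where $I_0$ is the modified Bessel function of the first kind of order $0$ and $S_r(x)$ is the circle of radius $r$ centered at $x$. -/
open MeasureTheory Real intervalIntegral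

/-- Modified Bessel function of the first kind, order 0. -/
noncomputable def besselI0 (t : ℝ) : ℝ :=
  (1 / π) * ∫ θ in (0:ℝ)..π, Real.cosh (t * Real.cos θ)

/-- Modified Bessel function of the first kind, order 1. -/
noncomputable def besselI1 (t : ℝ) : ℝ :=
  (1 / π) * ∫ θ in (0:ℝ)..π, Real.cosh (t * Real.cos θ) * Real.cos θ

/-- Bessel function of the first kind, order 0. -/
noncomputable def besselJ0 (t : ℝ) : ℝ :=
  (1 / π) * ∫ θ in (0:ℝ)..π, Real.cos (t * Real.sin θ)

/-- The Euclidean plane. -/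
abbrev E2 := EuclideanSpace ℝ (Fin 2)

/-- The Laplacian of a function on the plane, as a sum of second partial derivatives. -/
noncomputable def lap (f : E2 → ℝ) (y : E2) : ℝ :=
  ∑ i : Fin 2,
    fderiv ℝ (fun z => fderiv ℝ f z (EuclideanSpace.single i 1)) y (EuclideanSpace.single i 1)

/-- The point on the circle of radius `r` about `x` at angle `θ`. -/
noncomputable def circlePt (x : E2) (r θ : ℝ) : E2 :=
  x + (r * Real.cos θ) • EuclideanSpace.single 0 1 + (r * Real.sin θ) • EuclideanSpace.single 1 1

/-!
Let `G(s) = ∫₀^{2π} v(x + s e_θ) dθ`. Writing `Δ` in polar coordinates and integrating over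
`θ`, the angular second derivative drops out by periodicity, so `s G'' + G' = μ² s G`, with
`G'(0) = 0`. Differentiating under the integral sign shows that `J(s) = I₀(μ s)` solves the
same equation with `J'(0) = 0`. For two such solutions `(s W)' = 0`, where `W` is their
Wronskian; hence `W ≡ 0`, and since `J ≥ 1` the quotient `G / J` is constant, equal to
`G(0) / J(0) = 2π v(x)`.
-/

open Set Metric

theorem hasDerivAt_intervalIntegral_of_continuousOn_deriv
    {E : Type*} [NormedAddCommGroup E] [NormedSpace ℝ E] [CompleteSpace E]
    {a b s₀ : ℝ} {S : Set ℝ} (hS : IsOpen S) (hs₀ : s₀ ∈ S) {H H' : ℝ → ℝ → E}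
    (hH : ∀ s ∈ S, Continuous (H s))
    (hH' : ContinuousOn (fun p : ℝ × ℝ => H' p.1 p.2) (S ×ˢ univ))
    (hderiv : ∀ s ∈ S, ∀ θ, HasDerivAt (fun s => H s θ) (H' s θ) s) :
    HasDerivAt (fun s => ∫ θ in a..b, H s θ) (∫ θ in a..b, H' s₀ θ) s₀ := by
  obtain ⟨δ, hδ, hδS⟩ := Metric.isOpen_iff.1 hS s₀ hs₀
  have hK : IsCompact (closedBall s₀ (δ / 2) ×ˢ uIcc a b) :=
    (isCompact_closedBall _ _).prod isCompact_uIcc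
  have hKS : closedBall s₀ (δ / 2) ⊆ S :=
    (closedBall_subset_ball (by linarith)).trans hδS
  obtain ⟨C, hC⟩ := hK.exists_bound_of_continuousOn
    (hH'.mono (prod_mono hKS (subset_univ _)))
  have hball : ball s₀ (δ / 2) ⊆ S := ball_subset_closedBall.trans hKS
  refine (intervalIntegral.hasDerivAt_integral_of_dominated_loc_of_deriv_le (bound := fun _ => C)
    (ball_mem_nhds s₀ (half_pos hδ))
    (Filter.eventually_of_mem (ball_mem_nhds s₀ (half_pos hδ))
      fun s hs => (hH s (hball hs)).aestronglyMeasurable)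
    ((hH s₀ hs₀).intervalIntegrable a b)
    (hH'.comp_continuous (Continuous.prodMk_right s₀)
      fun θ => ⟨hs₀, mem_univ θ⟩).aestronglyMeasurable
    (Filter.Eventually.of_forall fun θ hθ s hs =>
      hC (s, θ) ⟨ball_subset_closedBall hs, uIoc_subset_uIcc hθ⟩)
    intervalIntegrable_const
    (Filter.Eventually.of_forall fun θ _ s hs => hderiv s (hball hs) θ)).2

section RadialODE

variable {c r : ℝ} {f f' f'' g g' g'' : ℝ → ℝ}

theorem eq_of_hasDerivAt_zero_on_Icc {a b : ℝ} {φ : ℝ → ℝ}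
    (h : ∀ s ∈ Icc a b, HasDerivAt φ 0 s) :
    ∀ s ∈ Icc a b, φ s = φ a :=
  constant_of_has_deriv_right_zero (fun s hs => (h s hs).continuousAt.continuousWithinAt)
    fun s hs => (h s (Ico_subset_Icc_self hs)).hasDerivWithinAt

theorem wronskian_eq_zero_of_radial_ode
    (hf : ∀ s ∈ Icc 0 r, HasDerivAt f (f' s) s)
    (hf' : ∀ s ∈ Icc 0 r, HasDerivAt f' (f'' s) s)
    (hg : ∀ s ∈ Icc 0 r, HasDerivAt g (g' s) s)
    (hg' : ∀ s ∈ Icc 0 r, HasDerivAt g' (g'' s) s)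
    (hf_ode : ∀ s ∈ Icc 0 r, s * f'' s + f' s = c * s * f s)
    (hg_ode : ∀ s ∈ Icc 0 r, s * g'' s + g' s = c * s * g s)
    (hf'0 : f' 0 = 0) (hg'0 : g' 0 = 0) :
    ∀ s ∈ Icc 0 r, f' s * g s - f s * g' s = 0 := by
  -- `s W(s)` is constant for the Wronskian `W` of two solutions, and vanishes at `s = 0`.
  have hsW : ∀ s ∈ Icc 0 r, s * (f' s * g s - f s * g' s) = 0 := by
    refine fun s hs => (eq_of_hasDerivAt_zero_on_Icc
      (φ := fun s => s * (f' s * g s - f s * g' s)) (fun t ht => ?_) s hs).trans (zero_mul _)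
    refine ((hasDerivAt_id t).mul (((hf' t ht).mul (hg t ht)).sub
      ((hf t ht).mul (hg' t ht)))).congr_deriv ?_
    simp only [id, Pi.sub_apply, Pi.mul_apply]
    linear_combination g t * hf_ode t ht - f t * hg_ode t ht
  intro s hs
  rcases eq_or_ne s 0 with rfl | hs0
  · simp [hf'0, hg'0]
  · exact (mul_eq_zero.1 (hsW s hs)).resolve_left hs0

theorem mul_eq_mul_of_radial_ode (hr : 0 ≤ r)
    (hf : ∀ s ∈ Icc 0 r, HasDerivAt f (f' s) s)
    (hf' : ∀ s ∈ Icc 0 r, HasDerivAt f' (f'' s) s)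
    (hg : ∀ s ∈ Icc 0 r, HasDerivAt g (g' s) s)
    (hg' : ∀ s ∈ Icc 0 r, HasDerivAt g' (g'' s) s)
    (hf_ode : ∀ s ∈ Icc 0 r, s * f'' s + f' s = c * s * f s)
    (hg_ode : ∀ s ∈ Icc 0 r, s * g'' s + g' s = c * s * g s)
    (hf'0 : f' 0 = 0) (hg'0 : g' 0 = 0) (hg0 : ∀ s ∈ Icc 0 r, g s ≠ 0) :
    f r * g 0 = f 0 * g r := by
  have hW := wronskian_eq_zero_of_radial_ode hf hf' hg hg' hf_ode hg_ode hf'0 hg'0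
  have hquot := eq_of_hasDerivAt_zero_on_Icc (φ := f / g) (fun s hs => by
    simpa [hW s hs] using (hf s hs).div (hg s hs) (hg0 s hs)) r (right_mem_Icc.2 hr)
  rwa [Pi.div_apply, Pi.div_apply,
    div_eq_div_iff (hg0 r (right_mem_Icc.2 hr)) (hg0 0 (left_mem_Icc.2 hr))] at hquot

end RadialODE

section Bessel

-- `I₀' = I₁`, but `besselI1` above integrates `cosh` instead of `sinh` and vanishes identically.
noncomputable def besselI0Deriv (t : ℝ) : ℝ :=
  (1 / π) * ∫ θ in (0:ℝ)..π, sinh (t * cos θ) * cos θ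

noncomputable def besselI0Deriv2 (t : ℝ) : ℝ :=
  (1 / π) * ∫ θ in (0:ℝ)..π, cosh (t * cos θ) * cos θ ^ 2

theorem hasDerivAt_besselI0 (t : ℝ) : HasDerivAt besselI0 (besselI0Deriv t) t :=
  (hasDerivAt_intervalIntegral_of_continuousOn_deriv isOpen_univ (mem_univ t)
    (fun _ _ => by fun_prop) (by fun_prop)
    fun s _ θ => (hasDerivAt_mul_const (cos θ)).cosh).const_mul (1 / π)

theorem hasDerivAt_besselI0Deriv (t : ℝ) : HasDerivAt besselI0Deriv (besselI0Deriv2 t) t :=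
  (hasDerivAt_intervalIntegral_of_continuousOn_deriv isOpen_univ (mem_univ t)
    (H' := fun t θ => cosh (t * cos θ) * cos θ ^ 2)
    (fun _ _ => by fun_prop) (by fun_prop)
    fun s _ θ => (((hasDerivAt_mul_const (cos θ)).sinh.mul_const (cos θ)).congr_deriv
      (by ring))).const_mul (1 / π)

theorem besselI0_ode (t : ℝ) : t * besselI0Deriv2 t + besselI0Deriv t = t * besselI0 t := by
  -- Integrate the derivative of `θ ↦ sinh (t cos θ) sin θ`, which vanishes at `0` and `π`.
  have hftc : ∫ θ in (0:ℝ)..π,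
      (t * (cosh (t * cos θ) * cos θ ^ 2) + sinh (t * cos θ) * cos θ) - t * cosh (t * cos θ)
        = 0 := by
    have hderiv : ∀ θ ∈ uIcc 0 π, HasDerivAt (fun θ => sinh (t * cos θ) * sin θ)
        (t * (cosh (t * cos θ) * cos θ ^ 2) + sinh (t * cos θ) * cos θ
          - t * cosh (t * cos θ)) θ := fun θ _ =>
      ((((hasDerivAt_cos θ).const_mul t).sinh).mul (hasDerivAt_sin θ)).congr_deriv
        (by linear_combination (-t * cosh (t * cos θ)) * sin_sq_add_cos_sq θ)
    simpa using intervalIntegral.integral_eq_sub_of_hasDerivAt hderiv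
      (Continuous.intervalIntegrable (by fun_prop) _ _)
  rw [intervalIntegral.integral_sub (Continuous.intervalIntegrable (by fun_prop) _ _)
      (Continuous.intervalIntegrable (by fun_prop) _ _),
    intervalIntegral.integral_add (Continuous.intervalIntegrable (by fun_prop) _ _)
      (Continuous.intervalIntegrable (by fun_prop) _ _),
    intervalIntegral.integral_const_mul, intervalIntegral.integral_const_mul] at hftc
  simp only [besselI0, besselI0Deriv, besselI0Deriv2]
  linear_combination (1 / π) * hftc

theorem besselI0_zero : besselI0 0 = 1 := by
  simp [besselI0, pi_ne_zero]

theorem besselI0Deriv_zero : besselI0Deriv 0 = 0 := by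
  simp [besselI0Deriv]

theorem one_le_besselI0 (t : ℝ) : 1 ≤ besselI0 t := by
  have h : ∫ θ in (0:ℝ)..π, (1 : ℝ) ≤ ∫ θ in (0:ℝ)..π, cosh (t * cos θ) :=
    intervalIntegral.integral_mono_on pi_pos.le intervalIntegrable_const
      (Continuous.intervalIntegrable (by fun_prop) _ _) fun θ _ => one_le_cosh _
  rw [intervalIntegral.integral_const, smul_eq_mul, mul_one, sub_zero] at h
  rw [besselI0, one_div, ← div_eq_inv_mul, le_div_iff₀ pi_pos, one_mul]
  exact h

theorem hasDerivAt_besselI0_const_mul (μ s : ℝ) :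
    HasDerivAt (fun s => besselI0 (μ * s)) (μ * besselI0Deriv (μ * s)) s :=
  ((hasDerivAt_besselI0 (μ * s)).comp s ((hasDerivAt_id s).const_mul μ)).congr_deriv
    (by simp [mul_comm])

theorem hasDerivAt_besselI0Deriv_const_mul (μ s : ℝ) :
    HasDerivAt (fun s => μ * besselI0Deriv (μ * s)) (μ ^ 2 * besselI0Deriv2 (μ * s)) s :=
  (((hasDerivAt_besselI0Deriv (μ * s)).comp s ((hasDerivAt_id s).const_mul μ)).const_mul
    μ).congr_deriv (by simp; ring)

theorem besselI0_const_mul_radial_ode (μ s : ℝ) :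
    s * (μ ^ 2 * besselI0Deriv2 (μ * s)) + μ * besselI0Deriv (μ * s) =
      μ ^ 2 * s * besselI0 (μ * s) := by
  linear_combination μ * besselI0_ode (μ * s)

end Bessel

section PolarCoordinates

local notation "e₀" => (EuclideanSpace.single 0 1 : E2)
local notation "e₁" => (EuclideanSpace.single 1 1 : E2)

noncomputable def radialDir (θ : ℝ) : E2 := cos θ • e₀ + sin θ • e₁

noncomputable def tangentDir (θ : ℝ) : E2 := (-sin θ) • e₀ + cos θ • e₁

theorem circlePt_eq_add_smul_radialDir (x : E2) (s θ : ℝ) :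
    circlePt x s θ = x + s • radialDir θ := by
  simp only [circlePt, radialDir, smul_add, smul_smul, add_assoc]

theorem norm_radialDir (θ : ℝ) : ‖radialDir θ‖ = 1 := by
  simp [EuclideanSpace.norm_eq, radialDir, Fin.sum_univ_two]

theorem circlePt_mem_ball {x : E2} {R s : ℝ} (hs : |s| < R) (θ : ℝ) :
    circlePt x s θ ∈ ball x R := by
  simpa [circlePt_eq_add_smul_radialDir, norm_smul, norm_radialDir] using hs

theorem circlePt_zero_radius (x : E2) (θ : ℝ) : circlePt x 0 θ = x := by
  simp [circlePt]

theorem circlePt_two_pi (x : E2) (s : ℝ) : circlePt x s (2 * π) = circlePt x s 0 := by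
  simp [circlePt]

theorem tangentDir_two_pi : tangentDir (2 * π) = tangentDir 0 := by
  simp [tangentDir]

theorem continuous_radialDir : Continuous radialDir := by
  unfold radialDir; fun_prop

theorem continuous_tangentDir : Continuous tangentDir := by
  unfold tangentDir; fun_prop

theorem continuous_circlePt (x : E2) : Continuous fun q : ℝ × ℝ => circlePt x q.1 q.2 := by
  unfold circlePt; fun_prop

theorem hasDerivAt_circlePt_radius (x : E2) (s θ : ℝ) :
    HasDerivAt (fun s => circlePt x s θ) (radialDir θ) s := by
  simp only [circlePt_eq_add_smul_radialDir]
  simpa using ((hasDerivAt_id s).smul_const (radialDir θ)).const_add x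

theorem hasDerivAt_tangentDir (θ : ℝ) : HasDerivAt tangentDir (-radialDir θ) θ := by
  refine (((hasDerivAt_sin θ).neg.smul_const e₀).add
    ((hasDerivAt_cos θ).smul_const e₁)).congr_deriv ?_
  simp only [radialDir, neg_smul, neg_add]

theorem hasDerivAt_circlePt_angle (x : E2) (s θ : ℝ) :
    HasDerivAt (fun θ => circlePt x s θ) (s • tangentDir θ) θ := by
  refine ((((hasDerivAt_cos θ).const_mul s).smul_const e₀).const_add x |>.add
    (((hasDerivAt_sin θ).const_mul s).smul_const e₁)).congr_deriv ?_
  simp only [tangentDir, smul_add, smul_smul, mul_neg]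

theorem apply_radialDir_add_apply_tangentDir (B : E2 →L[ℝ] E2 →L[ℝ] ℝ) (θ : ℝ) :
    B (radialDir θ) (radialDir θ) + B (tangentDir θ) (tangentDir θ) =
      B e₀ e₀ + B e₁ e₁ := by
  simp only [radialDir, tangentDir, map_add, map_smul, add_apply,
    smul_apply, smul_eq_mul]
  linear_combination (B e₀ e₀ + B e₁ e₁) * sin_sq_add_cos_sq θ

theorem integral_apply_radialDir (L : E2 →L[ℝ] ℝ) :
    ∫ θ in (0:ℝ)..2 * π, L (radialDir θ) = 0 := by
  simp only [radialDir, map_add, map_smul, smul_eq_mul]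
  rw [intervalIntegral.integral_add (Continuous.intervalIntegrable (by fun_prop) _ _)
      (Continuous.intervalIntegrable (by fun_prop) _ _),
    intervalIntegral.integral_mul_const, intervalIntegral.integral_mul_const,
    integral_cos, integral_sin]
  simp

theorem lap_eq_fderiv_fderiv_apply {v : E2 → ℝ} {y : E2}
    (hv : DifferentiableAt ℝ (fderiv ℝ v) y) :
    lap v y = fderiv ℝ (fderiv ℝ v) y e₀ e₀ + fderiv ℝ (fderiv ℝ v) y e₁ e₁ := by
  simp [lap, Fin.sum_univ_two, fderiv_clm_apply hv (differentiableAt_const _)]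

end PolarCoordinates

section AngularIntegral

variable {F : Type*} [NormedAddCommGroup F] [NormedSpace ℝ F]
  {v : E2 → ℝ} {x : E2} {R s : ℝ}

noncomputable def angularIntegral (v : E2 → ℝ) (x : E2) (s : ℝ) : ℝ :=
  ∫ θ in (0:ℝ)..2 * π, v (circlePt x s θ)

noncomputable def angularIntegralDeriv (v : E2 → ℝ) (x : E2) (s : ℝ) : ℝ :=
  ∫ θ in (0:ℝ)..2 * π, fderiv ℝ v (circlePt x s θ) (radialDir θ)

noncomputable def angularIntegralDeriv2 (v : E2 → ℝ) (x : E2) (s : ℝ) : ℝ :=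
  ∫ θ in (0:ℝ)..2 * π,
    fderiv ℝ (fderiv ℝ v) (circlePt x s θ) (radialDir θ) (radialDir θ)

theorem continuousOn_comp_circlePt {X : Type*} [TopologicalSpace X] {g : E2 → X}
    (hg : ContinuousOn g (ball x R)) :
    ContinuousOn (fun q : ℝ × ℝ => g (circlePt x q.1 q.2)) ({s | |s| < R} ×ˢ univ) :=
  hg.comp (continuous_circlePt x).continuousOn fun q hq => circlePt_mem_ball hq.1 q.2

theorem continuous_comp_circlePt {X : Type*} [TopologicalSpace X] {g : E2 → X}
    (hg : ContinuousOn g (ball x R)) (hs : |s| < R) :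
    Continuous fun θ => g (circlePt x s θ) :=
  (continuousOn_comp_circlePt hg).comp_continuous (Continuous.prodMk_right s)
    fun θ => ⟨hs, mem_univ θ⟩

theorem continuous_fderiv_comp_circlePt_apply {g : E2 → F} (hg : ContDiffOn ℝ 1 g (ball x R))
    (hs : |s| < R) {a : ℝ → E2} (ha : Continuous a) :
    Continuous fun θ => fderiv ℝ g (circlePt x s θ) (a θ) :=
  (continuous_comp_circlePt (hg.continuousOn_fderiv_of_isOpen isOpen_ball le_rfl) hs).clm_apply ha

theorem hasFDerivAt_circlePt_of_contDiffOn {g : E2 → F} (hg : ContDiffOn ℝ 1 g (ball x R))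
    (hs : |s| < R) (θ : ℝ) : HasFDerivAt g (fderiv ℝ g (circlePt x s θ)) (circlePt x s θ) :=
  ((hg.differentiableOn one_ne_zero).differentiableAt
    (isOpen_ball.mem_nhds (circlePt_mem_ball hs θ))).hasFDerivAt

theorem hasDerivAt_angularIntegral (hv : ContDiffOn ℝ 1 v (ball x R)) (hs : |s| < R) :
    HasDerivAt (angularIntegral v x) (angularIntegralDeriv v x s) s := by
  unfold angularIntegral angularIntegralDeriv
  exact hasDerivAt_intervalIntegral_of_continuousOn_deriv
    (isOpen_lt continuous_abs continuous_const) hs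
    (fun _ hs => continuous_comp_circlePt hv.continuousOn hs)
    ((continuousOn_comp_circlePt (hv.continuousOn_fderiv_of_isOpen isOpen_ball le_rfl)).clm_apply
      (continuous_radialDir.comp continuous_snd).continuousOn)
    fun s hs θ => (hasFDerivAt_circlePt_of_contDiffOn hv hs θ).comp_hasDerivAt s
      (hasDerivAt_circlePt_radius x s θ)

theorem hasDerivAt_angularIntegralDeriv (hv : ContDiffOn ℝ 2 v (ball x R)) (hs : |s| < R) :
    HasDerivAt (angularIntegralDeriv v x) (angularIntegralDeriv2 v x s) s := by
  have hv' : ContDiffOn ℝ 1 (fderiv ℝ v) (ball x R) :=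
    hv.fderiv_of_isOpen isOpen_ball (by norm_num)
  have hu : ContinuousOn (fun q : ℝ × ℝ => radialDir q.2) ({s | |s| < R} ×ˢ univ) :=
    (continuous_radialDir.comp continuous_snd).continuousOn
  have hderiv : ∀ s, |s| < R → ∀ θ, HasDerivAt (fun s => fderiv ℝ v (circlePt x s θ))
      (fderiv ℝ (fderiv ℝ v) (circlePt x s θ) (radialDir θ)) s := fun s hs θ =>
    (hasFDerivAt_circlePt_of_contDiffOn hv' hs θ).comp_hasDerivAt s
      (hasDerivAt_circlePt_radius x s θ)
  unfold angularIntegralDeriv angularIntegralDeriv2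
  exact hasDerivAt_intervalIntegral_of_continuousOn_deriv
    (H' := fun s θ => fderiv ℝ (fderiv ℝ v) (circlePt x s θ) (radialDir θ) (radialDir θ))
    (isOpen_lt continuous_abs continuous_const) hs
    (fun _ hs =>
      continuous_fderiv_comp_circlePt_apply (hv.of_le one_le_two) hs continuous_radialDir)
    (((continuousOn_comp_circlePt
      (hv'.continuousOn_fderiv_of_isOpen isOpen_ball le_rfl)).clm_apply hu).clm_apply hu)
    fun s hs θ => by simpa using (hderiv s hs θ).clm_apply (hasDerivAt_const s (radialDir θ))

theorem angularIntegralDeriv_zero : angularIntegralDeriv v x 0 = 0 := by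
  simpa [angularIntegralDeriv, circlePt_zero_radius] using integral_apply_radialDir (fderiv ℝ v x)

theorem angularIntegral_zero_radius : angularIntegral v x 0 = 2 * π * v x := by
  simp [angularIntegral, circlePt_zero_radius]

theorem integral_tangential_eq_zero (hv : ContDiffOn ℝ 2 v (ball x R)) (hs : |s| < R) :
    ∫ θ in (0:ℝ)..2 * π, (s ^ 2 * fderiv ℝ (fderiv ℝ v) (circlePt x s θ) (tangentDir θ)
      (tangentDir θ) - s * fderiv ℝ v (circlePt x s θ) (radialDir θ)) = 0 := by
  have hv' : ContDiffOn ℝ 1 (fderiv ℝ v) (ball x R) :=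
    hv.fderiv_of_isOpen isOpen_ball (by norm_num)
  -- The integrand is the `θ`-derivative of the `2π`-periodic function
  -- `s ∂_θ v (circlePt x s θ)`.
  have hderiv : ∀ θ, HasDerivAt (fun θ => s * fderiv ℝ v (circlePt x s θ) (tangentDir θ))
      (s ^ 2 * fderiv ℝ (fderiv ℝ v) (circlePt x s θ) (tangentDir θ) (tangentDir θ)
        - s * fderiv ℝ v (circlePt x s θ) (radialDir θ)) θ := fun θ => by
    refine (((hasFDerivAt_circlePt_of_contDiffOn hv' hs θ).comp_hasDerivAt θ
      (hasDerivAt_circlePt_angle x s θ)).clm_apply (hasDerivAt_tangentDir θ)).const_mul s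
      |>.congr_deriv ?_
    simp only [Function.comp_apply, map_smul, map_neg, smul_apply, smul_eq_mul]
    ring
  have hcont : Continuous fun θ =>
      s ^ 2 * fderiv ℝ (fderiv ℝ v) (circlePt x s θ) (tangentDir θ) (tangentDir θ)
        - s * fderiv ℝ v (circlePt x s θ) (radialDir θ) :=
    (((continuous_fderiv_comp_circlePt_apply hv' hs continuous_tangentDir).clm_apply
      continuous_tangentDir).const_mul _).sub
      ((continuous_fderiv_comp_circlePt_apply (hv.of_le one_le_two) hs
        continuous_radialDir).const_mul _)
  rw [intervalIntegral.integral_eq_sub_of_hasDerivAt (fun θ _ => hderiv θ)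
    (hcont.intervalIntegrable _ _), circlePt_two_pi, tangentDir_two_pi, sub_self]

theorem angularIntegral_radial_ode {c : ℝ} (hv : ContDiffOn ℝ 2 v (ball x R))
    (hlap : ∀ y ∈ ball x R, lap v y = c * v y) (hs : |s| < R) :
    s * angularIntegralDeriv2 v x s + angularIntegralDeriv v x s =
      c * s * angularIntegral v x s := by
  rcases eq_or_ne s 0 with rfl | hs0
  · simp [angularIntegralDeriv_zero]
  have hv' : ContDiffOn ℝ 1 (fderiv ℝ v) (ball x R) :=
    hv.fderiv_of_isOpen isOpen_ball (by norm_num)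
  have hD0 : Continuous fun θ => v (circlePt x s θ) := continuous_comp_circlePt hv.continuousOn hs
  have hD1 : Continuous fun θ => fderiv ℝ v (circlePt x s θ) (radialDir θ) :=
    continuous_fderiv_comp_circlePt_apply (hv.of_le one_le_two) hs continuous_radialDir
  have hD2 : Continuous fun θ =>
      fderiv ℝ (fderiv ℝ v) (circlePt x s θ) (radialDir θ) (radialDir θ) :=
    (continuous_fderiv_comp_circlePt_apply hv' hs continuous_radialDir).clm_apply
      continuous_radialDir
  have hT : Continuous fun θ =>
      s ^ 2 * fderiv ℝ (fderiv ℝ v) (circlePt x s θ) (tangentDir θ) (tangentDir θ)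
        - s * fderiv ℝ v (circlePt x s θ) (radialDir θ) :=
    (((continuous_fderiv_comp_circlePt_apply hv' hs continuous_tangentDir).clm_apply
      continuous_tangentDir).const_mul _).sub (hD1.const_mul _)
  -- Polar form of the Laplacian: `s² Δv = s² ∂²_s v + s ∂_s v + ∂²_θ v`.
  have hpolar : ∀ θ,
      s * (s * fderiv ℝ (fderiv ℝ v) (circlePt x s θ) (radialDir θ) (radialDir θ)
        + fderiv ℝ v (circlePt x s θ) (radialDir θ)) = c * s ^ 2 * v (circlePt x s θ)
      - (s ^ 2 * fderiv ℝ (fderiv ℝ v) (circlePt x s θ) (tangentDir θ) (tangentDir θ)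
        - s * fderiv ℝ v (circlePt x s θ) (radialDir θ)) := fun θ => by
    have hΔ := hlap _ (circlePt_mem_ball hs θ)
    rw [lap_eq_fderiv_fderiv_apply (hasFDerivAt_circlePt_of_contDiffOn hv' hs θ).differentiableAt,
      ← apply_radialDir_add_apply_tangentDir _ θ] at hΔ
    linear_combination s ^ 2 * hΔ
  refine mul_left_cancel₀ hs0 ?_
  calc s * (s * angularIntegralDeriv2 v x s + angularIntegralDeriv v x s)
      = ∫ θ in (0:ℝ)..2 * π,
          s * (s * fderiv ℝ (fderiv ℝ v) (circlePt x s θ) (radialDir θ) (radialDir θ)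
            + fderiv ℝ v (circlePt x s θ) (radialDir θ)) := by
        rw [intervalIntegral.integral_const_mul, intervalIntegral.integral_add
          ((hD2.intervalIntegrable _ _).const_mul s) (hD1.intervalIntegrable _ _),
          intervalIntegral.integral_const_mul, angularIntegralDeriv2, angularIntegralDeriv]
    _ = c * s ^ 2 * angularIntegral v x s - 0 := by
        rw [intervalIntegral.integral_congr fun θ _ => hpolar θ, intervalIntegral.integral_sub
          ((hD0.intervalIntegrable _ _).const_mul _) (hT.intervalIntegrable _ _),
          intervalIntegral.integral_const_mul, integral_tangential_eq_zero hv hs, angularIntegral]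
    _ = s * (c * s * angularIntegral v x s) := by ring

end AngularIntegral

theorem circle_mean_value_panharmonic_general
    (Ω : Set E2) (hΩo : IsOpen Ω)
    (v : E2 → ℝ) (hv : ContDiffOn ℝ 2 v Ω)
    (μ : ℝ)
    (hpan : ∀ y ∈ Ω, lap v y = μ ^ 2 * v y)
    (x : E2) (r : ℝ) (hr : 0 < r) (hball : Metric.closedBall x r ⊆ Ω) :
    (1 / (2 * π)) * ∫ θ in (0:ℝ)..(2 * π), v (circlePt x r θ) =
      besselI0 (μ * r) * v x := by
  obtain ⟨ε, hε, hεΩ⟩ :=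
    (isCompact_closedBall x r).exists_cthickening_subset_open hΩo hball
  rw [cthickening_closedBall hε.le hr.le] at hεΩ
  have hR : ball x (ε + r) ⊆ Ω := ball_subset_closedBall.trans hεΩ
  have hvR : ContDiffOn ℝ 2 v (ball x (ε + r)) := hv.mono hR
  have hIcc : ∀ s ∈ Icc 0 r, |s| < ε + r := fun s hs => by
    rw [abs_of_nonneg hs.1]; linarith [hs.2]
  have key := mul_eq_mul_of_radial_ode (c := μ ^ 2) hr.le
    (fun s hs => hasDerivAt_angularIntegral (hvR.of_le one_le_two) (hIcc s hs))
    (fun s hs => hasDerivAt_angularIntegralDeriv hvR (hIcc s hs))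
    (fun s _ => hasDerivAt_besselI0_const_mul μ s)
    (fun s _ => hasDerivAt_besselI0Deriv_const_mul μ s)
    (fun s hs => angularIntegral_radial_ode hvR (fun y hy => hpan y (hR hy)) (hIcc s hs))
    (fun s _ => besselI0_const_mul_radial_ode μ s)
    angularIntegralDeriv_zero (by simp [besselI0Deriv_zero])
    (fun s _ => (one_pos.trans_le (one_le_besselI0 _)).ne')
  rw [angularIntegral_zero_radius, mul_zero, besselI0_zero, mul_one] at key
  rw [← angularIntegral, key]
  field_simp

theorem circle_mean_value_panharmonic
    (Ω : Set E2) (hΩo : IsOpen Ω) (hΩc : IsConnected Ω)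
    (v : E2 → ℝ) (hv : ContDiffOn ℝ 2 v Ω)
    (μ : ℝ) (hμ : μ ≠ 0)
    (hpan : ∀ y ∈ Ω, lap v y = μ ^ 2 * v y)
    (x : E2) (r : ℝ) (hr : 0 < r) (hball : Metric.closedBall x r ⊆ Ω) :
    (1 / (2 * π)) * ∫ θ in (0:ℝ)..(2 * π), v (circlePt x r θ) =
      besselI0 (μ * r) * v x :=
  circle_mean_value_panharmonic_general Ω hΩo v hv μ hpan x r hr hball
end

section
/- Let $\Omega \subset \mathbb{R}^2$ be a bounded domain with $|\Omega| \geq \pi r^2$ for some $r > 0$, and let $x_0 \in \Omega$. If the identity $\frac{1}{2} = \frac{1}{|\Omega|}\int_\Omega \log\frac{r}{|x_0 - y|}\, dy$ holds, and moreover $\frac{1}{2} = \frac{1}{\pi r^2}\int_{D_r(x_0)} \log\frac{r}{|x_0-y|}\, dy$, then $\Omega = D_r(x_0)$ up to a set of measure zero; more precisely, the open sets $\Omega \setminus \overline{D_r(x_0)}$ and $D_r(x_0) \setminus \overline{\Omega}$ are both empty. -/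
open MeasureTheory Real intervalIntegral

/-!
With `w y = log (r / ‖x₀ - y‖)`, the two hypotheses say `∫_Ω w = |Ω| / 2` and
`∫_{D_r(x₀)} w = π r² / 2`, so `∫_{Ω \ D} w - ∫_{D \ Ω} w = (|Ω| - π r²) / 2 ≥ 0`.
Since `w ≤ 0` off the disc and `w ≥ 0` on it, both integrals vanish; as `w` is strictly
negative on `Ω \ closure D` and strictly positive on `D \ closure Ω` (which misses `x₀`),
these open sets are null, hence empty.
-/

open Metric Set Bornology

section SetIntegral

variable {α : Type*} [MeasurableSpace α] {μ : Measure α} {f : α → ℝ} {s t : Set α}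

theorem setIntegral_sdiff_eq_zero_of_setIntegral_le (hs : MeasurableSet s) (ht : MeasurableSet t)
    (hfs : IntegrableOn f s μ) (hft : IntegrableOn f t μ) (hneg : ∀ x ∈ s \ t, f x ≤ 0)
    (hpos : ∀ x ∈ t \ s, 0 ≤ f x) (hle : ∫ x in t, f x ∂μ ≤ ∫ x in s, f x ∂μ) :
    ∫ x in s \ t, f x ∂μ = 0 ∧ ∫ x in t \ s, f x ∂μ = 0 := by
  have hs_split := integral_inter_add_sdiff ht hfs
  have ht_split := integral_inter_add_sdiff hs hft
  rw [inter_comm] at ht_split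
  have hst := setIntegral_nonpos (μ := μ) (hs.diff ht) hneg
  have hts := setIntegral_nonneg (μ := μ) (ht.diff hs) hpos
  constructor <;> linarith

theorem IsOpen.eq_empty_of_setIntegral_eq_zero [TopologicalSpace α] [OpensMeasurableSpace α]
    [μ.IsOpenPosMeasure] {U : Set α} (hU : IsOpen U) (hUs : U ⊆ s) (hs : MeasurableSet s)
    (hf : IntegrableOn f s μ) (hnonneg : ∀ x ∈ s, 0 ≤ f x) (hpos : ∀ x ∈ U, 0 < f x)
    (hzero : ∫ x in s, f x ∂μ = 0) : U = ∅ := by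
  have hf_ae : f =ᵐ[μ.restrict U] 0 :=
    ae_restrict_of_ae_restrict_of_subset hUs
      ((setIntegral_eq_zero_iff_of_nonneg_ae (ae_restrict_of_forall_mem hs hnonneg) hf).1 hzero)
  have hfalse : ∀ᵐ x ∂μ.restrict U, False := by
    filter_upwards [hf_ae, ae_restrict_of_forall_mem hU.measurableSet hpos] with x hx hxpos
    exact hxpos.ne' hx
  rw [← hU.measure_eq_zero_iff μ, ← Measure.restrict_eq_zero]
  exact ae_eq_bot.1 (Filter.eventually_false_iff_eq_bot.1 hfalse)

end SetIntegral

theorem Real.abs_log_div_le (a b : ℝ) : |log (a / b)| ≤ |log a| + |log b| := by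
  rcases eq_or_ne a 0 with rfl | ha
  · simp
  rcases eq_or_ne b 0 with rfl | hb
  · simp
  rw [log_div ha hb]
  exact abs_sub _ _

section LogNorm

variable {E : Type*} [NormedAddCommGroup E] [NormedSpace ℝ E] [FiniteDimensional ℝ E]
  [MeasurableSpace E] [BorelSpace E] {μ : Measure E} [μ.IsAddHaarMeasure]

theorem integrableOn_log_norm_ball (R : ℝ) :
    IntegrableOn (fun x : E => log ‖x‖) (ball 0 R) μ := by
  rcases subsingleton_or_nontrivial E with hE | hE
  · simp [Subsingleton.elim _ (0 : E)]
  rw [integrableOn_fun_norm_addHaar]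
  rcases le_or_gt R 0 with hR | hR
  · simp [Ioo_eq_empty_of_le hR]
  rw [← intervalIntegrable_iff_integrableOn_Ioo_of_le hR.le]
  exact intervalIntegral.intervalIntegrable_log'.continuousOn_mul (continuous_pow _).continuousOn

theorem integrableOn_log_norm_sub_ball (x₀ : E) (R : ℝ) :
    IntegrableOn (fun y => log ‖x₀ - y‖) (ball x₀ R) μ := by
  have hpre : (x₀ - ·) ⁻¹' ball 0 R = ball x₀ R := by
    ext y; simp [dist_eq_norm, norm_sub_rev]
  rw [← hpre]
  exact ((μ.measurePreserving_sub_left x₀).integrableOn_comp_preimage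
    (MeasurableEquiv.subLeft x₀).measurableEmbedding).2 (integrableOn_log_norm_ball R)

theorem Bornology.IsBounded.integrableOn_log_div_norm_sub {s : Set E} (hs : IsBounded s)
    (x₀ : E) (r : ℝ) : IntegrableOn (fun y => log (r / ‖x₀ - y‖)) s μ := by
  obtain ⟨R, hR⟩ := hs.subset_ball x₀
  refine Integrable.mono' ?_ (Measurable.aestronglyMeasurable (by fun_prop))
    (ae_of_all _ fun y => (norm_eq_abs _).trans_le (abs_log_div_le r _))
  exact ((integrableOn_const measure_ball_lt_top.ne).add
    (integrableOn_log_norm_sub_ball x₀ R).abs).mono_set hR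

end LogNorm

section LogKernelSign

variable {E : Type*} [NormedAddCommGroup E] {x₀ y : E} {r : ℝ}

theorem log_div_norm_sub_nonpos (hr : 0 ≤ r) (hy : y ∉ ball x₀ r) :
    log (r / ‖x₀ - y‖) ≤ 0 := by
  rw [mem_ball', dist_eq_norm, not_lt] at hy
  exact log_nonpos (div_nonneg hr (norm_nonneg _)) (div_le_one_of_le₀ hy (norm_nonneg _))

theorem log_div_norm_sub_neg (hr : 0 < r) (hy : y ∉ closedBall x₀ r) :
    log (r / ‖x₀ - y‖) < 0 := by
  rw [mem_closedBall', dist_eq_norm, not_le] at hy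
  exact log_neg (div_pos hr (hr.trans hy)) ((div_lt_one (hr.trans hy)).2 hy)

theorem log_div_norm_sub_pos (hy : y ∈ ball x₀ r) (hne : y ≠ x₀) :
    0 < log (r / ‖x₀ - y‖) := by
  rw [mem_ball', dist_eq_norm] at hy
  exact log_pos ((one_lt_div (norm_pos_iff.2 (sub_ne_zero.2 hne.symm))).2 hy)

theorem log_div_norm_sub_nonneg (hy : y ∈ ball x₀ r) : 0 ≤ log (r / ‖x₀ - y‖) := by
  rcases eq_or_ne y x₀ with rfl | hne
  · simp -- `log (r / 0) = log 0 = 0`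
  · exact (log_div_norm_sub_pos hy hne).le

end LogKernelSign

theorem inverse_weighted_mean_harmonic_general
    (Ω : Set E2) (hΩo : IsOpen Ω)
    (hΩb : Bornology.IsBounded Ω)
    (r : ℝ) (hr : 0 < r) (harea : π * r ^ 2 ≤ (volume Ω).toReal)
    (x₀ : E2) (hx₀ : x₀ ∈ Ω)
    (h1 : (1 : ℝ) / 2 = (1 / (volume Ω).toReal) * ∫ y in Ω, Real.log (r / ‖x₀ - y‖))
    (h2 : (1 : ℝ) / 2 = (1 / (π * r ^ 2)) * ∫ y in Metric.ball x₀ r, Real.log (r / ‖x₀ - y‖)) :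
    Ω \ closure (Metric.ball x₀ r) = ∅ ∧ Metric.ball x₀ r \ closure Ω = ∅ := by
  set w : E2 → ℝ := fun y => log (r / ‖x₀ - y‖)
  have hwΩ : IntegrableOn w Ω := hΩb.integrableOn_log_div_norm_sub x₀ r
  have hwD : IntegrableOn w (ball x₀ r) := isBounded_ball.integrableOn_log_div_norm_sub x₀ r
  have hle : ∫ y in ball x₀ r, w y ≤ ∫ y in Ω, w y := by
    have hD : 0 < π * r ^ 2 := by positivity
    have hV : 0 < (volume Ω).toReal := hD.trans_le harea
    field_simp at h1 h2
    linarith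
  obtain ⟨hout, hin⟩ := setIntegral_sdiff_eq_zero_of_setIntegral_le hΩo.measurableSet
    measurableSet_ball hwΩ hwD (fun y hy => log_div_norm_sub_nonpos hr.le hy.2)
    (fun y hy => log_div_norm_sub_nonneg hy.1) hle
  constructor
  · refine (hΩo.sdiff isClosed_closure).eq_empty_of_setIntegral_eq_zero (f := fun y => -w y)
      (sdiff_subset_sdiff_right subset_closure) (hΩo.measurableSet.diff measurableSet_ball)
      (hwΩ.mono_set sdiff_subset).neg
      (fun y hy => neg_nonneg.2 (log_div_norm_sub_nonpos hr.le hy.2))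
      (fun y hy => ?_) (by rw [MeasureTheory.integral_neg, hout, neg_zero])
    rw [closure_ball x₀ hr.ne'] at hy
    exact neg_pos.2 (log_div_norm_sub_neg hr hy.2)
  · refine (isOpen_ball.sdiff isClosed_closure).eq_empty_of_setIntegral_eq_zero
      (sdiff_subset_sdiff_right subset_closure) (measurableSet_ball.diff hΩo.measurableSet)
      (hwD.mono_set sdiff_subset) (fun y hy => log_div_norm_sub_nonneg hy.1) (fun y hy => ?_) hin
    exact log_div_norm_sub_pos hy.1 fun h => hy.2 (h ▸ subset_closure hx₀)

theorem inverse_weighted_mean_harmonic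
    (Ω : Set E2) (hΩo : IsOpen Ω) (hΩc : IsConnected Ω)
    (hΩb : Bornology.IsBounded Ω)
    (r : ℝ) (hr : 0 < r) (harea : π * r ^ 2 ≤ (volume Ω).toReal)
    (x₀ : E2) (hx₀ : x₀ ∈ Ω)
    (h1 : (1 : ℝ) / 2 = (1 / (volume Ω).toReal) * ∫ y in Ω, Real.log (r / ‖x₀ - y‖))
    (h2 : (1 : ℝ) / 2 = (1 / (π * r ^ 2)) * ∫ y in Metric.ball x₀ r, Real.log (r / ‖x₀ - y‖)) :
    Ω \ closure (Metric.ball x₀ r) = ∅ ∧ Metric.ball x₀ r \ closure Ω = ∅ :=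
  inverse_weighted_mean_harmonic_general Ω hΩo hΩb r hr harea x₀ hx₀ h1 h2
end
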